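/- For the seven-observation doubly truncated dataset X = (0.75, 1.05, 1.25, 1.5, 2.25, 2.4, 2.5) with truncation intervals [U_i, V_i] given by [0.4, 2], [0.3, 1.4], [0.8, 1.8], [0, 2.3], [1.3, 2.6], [1.1, 3], [2.45, 3.4], the conditional likelihood ℒ has no maximizer over the probability simplex Δ: for every p ∈ Δ there exists q ∈ Δ with ℒ(q) > ℒ(p). -/

import Mathlib

/-!
Observation 6 (counting from 0) is isolated: its truncation interval `[2.45, 3.4]` contains no
other observed value, so its factor in `ℒ` is `p₆ / p₆ = 1` whatever `p₆ > 0` is. But `X₆ = 2.5`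
lies in the interval `[1.3, 2.6]` of observation 4, so `p₆` enters that factor's denominator.
Halving `p₆` and renormalising (`ℒ` is invariant under positive scaling) therefore strictly
increases `ℒ` at every `p` with `ℒ(p) > 0`, and every `p` with `ℒ(p) = 0` is beaten by the
uniform distribution.
-/

open Finset

/-- Conditional likelihood of a doubly truncated dataset at a point `p` of the
probability simplex: `ℒ(p) = ∏ i, p i / ∑_{j : U i ≤ X j ≤ V i} p j`
(in Lean, division by `0` yields `0`, matching the convention `0/0 = 0`). -/
noncomputable def dtLik {n : ℕ} (U V X : Fin n → ℝ) (p : Fin n → ℝ) : ℝ :=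
  ∏ i, p i / ∑ j ∈ univ.filter (fun j => U i ≤ X j ∧ X j ≤ V i), p j

/-- The observed values of the seven-observation dataset of Xiao & Hudgens. -/
noncomputable def X₀ : Fin 7 → ℝ := ![0.75, 1.05, 1.25, 1.5, 2.25, 2.4, 2.5]

/-- The left truncation limits of the dataset of Xiao & Hudgens. -/
noncomputable def U₀ : Fin 7 → ℝ := ![0.4, 0.3, 0.8, 0, 1.3, 1.1, 2.45]

/-- The right truncation limits of the dataset of Xiao & Hudgens. -/
noncomputable def V₀ : Fin 7 → ℝ := ![2, 1.4, 1.8, 2.3, 2.6, 3, 3.4]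

theorem inv_sum_smul_mem_stdSimplex {ι : Type*} [Fintype ι] {r : ι → ℝ} (hr : ∀ j, 0 ≤ r j)
    (hs : 0 < ∑ j, r j) : (∑ j, r j)⁻¹ • r ∈ stdSimplex ℝ ι :=
  ⟨fun j => smul_nonneg (inv_nonneg.2 hs.le) (hr j), by
    simp only [Pi.smul_apply, smul_eq_mul, ← mul_sum, inv_mul_cancel₀ hs.ne']⟩

theorem update_half_pos {ι : Type*} [DecidableEq ι] {p : ι → ℝ} (hp : ∀ j, 0 < p j) (k j : ι) :
    0 < Function.update p k (p k / 2) j := by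
  rcases eq_or_ne j k with rfl | hj
  · simpa using hp j
  · simpa [hj] using hp j

namespace DoublyTruncated

variable {n : ℕ} (U V X : Fin n → ℝ)

noncomputable def riskSet (i : Fin n) : Finset (Fin n) :=
  univ.filter (fun j => U i ≤ X j ∧ X j ≤ V i)

theorem dtLik_eq_prod_riskSet (p : Fin n → ℝ) :
    dtLik U V X p = ∏ i, p i / ∑ j ∈ riskSet U V X i, p j :=
  rfl

variable {U V X}

theorem dtLik_smul {c : ℝ} (hc : c ≠ 0) (p : Fin n → ℝ) :
    dtLik U V X (c • p) = dtLik U V X p := by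
  simp only [dtLik_eq_prod_riskSet, Pi.smul_apply, smul_eq_mul, ← mul_sum,
    mul_div_mul_left _ _ hc]

theorem dtLik_eq_zero_of_eq_zero {p : Fin n → ℝ} {i : Fin n} (hi : p i = 0) :
    dtLik U V X p = 0 :=
  prod_eq_zero (mem_univ i) (by rw [hi, zero_div])

theorem mem_riskSet_self (hself : ∀ i, U i ≤ X i ∧ X i ≤ V i) (i : Fin n) :
    i ∈ riskSet U V X i :=
  mem_filter.2 ⟨mem_univ i, hself i⟩

theorem sum_riskSet_pos (hself : ∀ i, U i ≤ X i ∧ X i ≤ V i) {p : Fin n → ℝ}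
    (hp : ∀ j, 0 < p j) (i : Fin n) : 0 < ∑ j ∈ riskSet U V X i, p j :=
  sum_pos (fun j _ => hp j) ⟨i, mem_riskSet_self hself i⟩

theorem dtLik_pos (hself : ∀ i, U i ≤ X i ∧ X i ≤ V i) {p : Fin n → ℝ}
    (hp : ∀ j, 0 < p j) : 0 < dtLik U V X p :=
  prod_pos fun i _ => div_pos (hp i) (sum_riskSet_pos hself hp i)

theorem dtLik_lt_update_half (hself : ∀ i, U i ≤ X i ∧ X i ≤ V i) {p : Fin n → ℝ}
    (hp : ∀ j, 0 < p j) {k i : Fin n} (hk : riskSet U V X k = {k}) (hik : i ≠ k)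
    (hki : k ∈ riskSet U V X i) :
    dtLik U V X p < dtLik U V X (Function.update p k (p k / 2)) := by
  set r := Function.update p k (p k / 2)
  have hr : ∀ j, 0 < r j := update_half_pos hp k
  have hrp : ∀ j, r j ≤ p j := by
    intro j
    rcases eq_or_ne j k with rfl | hj
    · simp [r, (hp j).le]
    · simp [r, hj]
  have hsum_le : ∀ j, ∑ l ∈ riskSet U V X j, r l ≤ ∑ l ∈ riskSet U V X j, p l :=
    fun j => sum_le_sum fun l _ => hrp l
  rw [dtLik_eq_prod_riskSet, dtLik_eq_prod_riskSet]
  refine prod_lt_prod (fun j _ => div_pos (hp j) (sum_riskSet_pos hself hp j)) ?_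
    ⟨i, mem_univ i, ?_⟩
  · intro j _
    rcases eq_or_ne j k with rfl | hj
    · simp [hk, (hp j).ne', (hr j).ne']
    · rw [show r j = p j by simp [r, hj]]
      exact div_le_div_of_nonneg_left (hp j).le (sum_riskSet_pos hself hr j) (hsum_le j)
  · rw [show r i = p i by simp [r, hik]]
    refine div_lt_div_of_pos_left (hp i) (sum_riskSet_pos hself hr i) ?_
    exact sum_lt_sum (fun l _ => hrp l) ⟨k, hki, by simp [r, hp k]⟩

theorem exists_dtLik_gt_of_isolated (hself : ∀ i, U i ≤ X i ∧ X i ≤ V i) {k i : Fin n}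
    (hk : riskSet U V X k = {k}) (hik : i ≠ k) (hki : k ∈ riskSet U V X i) :
    ∀ p ∈ stdSimplex ℝ (Fin n), ∃ q ∈ stdSimplex ℝ (Fin n),
      dtLik U V X p < dtLik U V X q := by
  rintro p ⟨hnn, -⟩
  by_cases hp : ∀ j, 0 < p j
  · set r := Function.update p k (p k / 2)
    have hr : ∀ j, 0 < r j := update_half_pos hp k
    have hs : 0 < ∑ j, r j := sum_pos (fun j _ => hr j) ⟨k, mem_univ k⟩
    refine ⟨(∑ j, r j)⁻¹ • r, inv_sum_smul_mem_stdSimplex (fun j => (hr j).le) hs, ?_⟩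
    rw [dtLik_smul (inv_ne_zero hs.ne')]
    exact dtLik_lt_update_half hself hp hk hik hki
  · push Not at hp
    obtain ⟨j, hj⟩ := hp
    have : Nonempty (Fin n) := ⟨k⟩
    refine ⟨stdSimplex.barycenter.val, stdSimplex.barycenter.property, ?_⟩
    rw [dtLik_eq_zero_of_eq_zero (le_antisymm hj (hnn j))]
    exact dtLik_pos hself fun _ => by simp [k.pos]

theorem U₀_le_X₀_le_V₀ : ∀ i, U₀ i ≤ X₀ i ∧ X₀ i ≤ V₀ i := by
  norm_num [Fin.forall_fin_succ, U₀, V₀, X₀]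

theorem riskSet_six : riskSet U₀ V₀ X₀ 6 = {6} := by
  ext j
  simp only [riskSet, mem_filter, mem_univ, true_and, mem_singleton,
    show U₀ 6 = 2.45 from rfl, show V₀ 6 = 3.4 from rfl]
  revert j
  norm_num [Fin.forall_fin_succ, X₀]
  decide

theorem six_mem_riskSet_four : 6 ∈ riskSet U₀ V₀ X₀ 4 :=
  mem_filter.2 ⟨mem_univ 6, show (1.3 : ℝ) ≤ 2.5 ∧ (2.5 : ℝ) ≤ 2.6 by norm_num⟩

end DoublyTruncated

/-- For the seven-observation doubly truncated dataset of Xiao & Hudgens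
(Table 1 of the paper), the NPMLE does not exist: the conditional likelihood
has no maximizer over the probability simplex, i.e. every `p` in the simplex
is strictly beaten by some `q` in the simplex. -/
theorem xiao_example_npmle_not_exists :
    ∀ p ∈ stdSimplex ℝ (Fin 7), ∃ q ∈ stdSimplex ℝ (Fin 7),
      dtLik U₀ V₀ X₀ p < dtLik U₀ V₀ X₀ q :=
  DoublyTruncated.exists_dtLik_gt_of_isolated DoublyTruncated.U₀_le_X₀_le_V₀
    DoublyTruncated.riskSet_six (by decide) DoublyTruncated.six_mem_riskSet_four
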